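/- arXiv:1404.5601 — 2 statements merged into one kernel-verified Lean document; each statement's English description precedes it below -/
import Mathlib

section
/- Let (X_n, R_n), n ≥ 1, be an i.i.d. sequence of pairs with X_n > 0, E[X_1] = τ < ∞, E[|R_1|] < ∞, E[R_1] = r. With N(t) the renewal counting process and R(t) = Σ_{n=1}^{N(t)} R_n, one has E[R(t)]/t → r/τ as t → ∞. -/
/-!
Write `m(t) = ∑ₙ P(Sₙ ≤ t)` for the renewal function. Since `(Xₙ, Rₙ)` is independent of
`Sₙ`, the expected reward `E[R(t)] = ∑ₙ E[Rₙ; Sₙ₊₁ ≤ t]` differs from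
`r m(t) = ∑ₙ E[Rₙ; Sₙ ≤ t]` only by the reward of the cycle in progress at time `t`. That cycle
either starts by time `(1 - ε) t`, and then lasts longer than `ε t`, or starts in
`((1 - ε) t, t]`; this bounds the difference by
`m((1 - ε) t) E[|R₁|; X₁ > ε t] + E|R₁| (m(t) - m((1 - ε) t))`, which is `o(t) + O(ε t)` by the
elementary renewal theorem `m(t) / t → 1 / τ`. The latter follows from Wald's identity
`E[S_{N(t)+1}] = τ m(t)`, applied to the interarrival times truncated at a level `b` for the
upper bound; the Chernoff bound `P(Sₙ ≤ t) ≤ eᵗ E[e^{-X₁}]ⁿ` makes all the series converge.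
-/

open MeasureTheory ProbabilityTheory Filter

/-- Renewal epoch: `rS X n ω = X_1 + ... + X_n` (0-indexed: sum of `X 0, ..., X (n-1)`). -/
noncomputable def rS {Ω : Type*} (X : ℕ → Ω → ℝ) (n : ℕ) (ω : Ω) : ℝ :=
  ∑ i ∈ Finset.range n, X i ω

/-- Renewal counting process: `rN X t ω = sup {n : S_n ≤ t}`. -/
noncomputable def rN {Ω : Type*} (X : ℕ → Ω → ℝ) (t : ℝ) (ω : Ω) : ℕ :=
  sSup {n | rS X n ω ≤ t}

open Topology Finset

structure IsIIDSeq {Ω E : Type*} [MeasurableSpace Ω] [MeasurableSpace E] (μ : Measure Ω)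
    (Z : ℕ → Ω → E) : Prop where
  measurable : ∀ n, Measurable (Z n)
  indep : iIndepFun Z μ
  identDistrib : ∀ n, IdentDistrib (Z n) (Z 0) μ μ

lemma IsIIDSeq.comp {Ω E F : Type*} [MeasurableSpace Ω] [MeasurableSpace E] [MeasurableSpace F]
    {μ : Measure Ω} {Z : ℕ → Ω → E} (hZ : IsIIDSeq μ Z) {ψ : E → F} (hψ : Measurable ψ) :
    IsIIDSeq μ (fun n => ψ ∘ Z n) :=
  ⟨fun n => hψ.comp (hZ.measurable n), hZ.indep.comp (fun _ => ψ) (fun _ => hψ),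
    fun n => (hZ.identDistrib n).comp hψ⟩

section Epochs

variable {Ω : Type*} {X : ℕ → Ω → ℝ} {ω : Ω} {t : ℝ}

@[simp] lemma rS_zero (X : ℕ → Ω → ℝ) (ω : Ω) : rS X 0 ω = 0 :=
  sum_range_zero _

lemma rS_succ (X : ℕ → Ω → ℝ) (n : ℕ) (ω : Ω) : rS X (n + 1) ω = rS X n ω + X n ω :=
  sum_range_succ _ _

lemma measurable_rS [MeasurableSpace Ω] (hX : ∀ n, Measurable (X n)) (n : ℕ) :
    Measurable (rS X n) :=
  Finset.measurable_sum _ fun i _ => hX i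

lemma monotone_rS (hX : ∀ n, 0 ≤ X n ω) : Monotone (rS X · ω) :=
  monotone_nat_of_le_succ fun n => by simpa [rS_succ] using hX n

lemma bddAbove_setOf_rS_le (h : Tendsto (rS X · ω) atTop atTop) (t : ℝ) :
    BddAbove {n | rS X n ω ≤ t} := by
  obtain ⟨N, hN⟩ := eventually_atTop.1 (h.eventually_gt_atTop t)
  exact ⟨N, fun n hn => not_lt.1 fun hNn => (hN n hNn.le).not_ge hn⟩

lemma le_rN_iff (hX : ∀ n, 0 ≤ X n ω) (ht : 0 ≤ t) (hbdd : BddAbove {n | rS X n ω ≤ t})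
    {n : ℕ} : n ≤ rN X t ω ↔ rS X n ω ≤ t := by
  have hN : rN X t ω ∈ {n | rS X n ω ≤ t} := Nat.sSup_mem ⟨0, by simpa using ht⟩ hbdd
  exact ⟨fun hn => (monotone_rS hX hn).trans hN, fun hn => le_csSup hbdd hn⟩

lemma rS_rN_le (hX : ∀ n, 0 ≤ X n ω) (ht : 0 ≤ t) (hbdd : BddAbove {n | rS X n ω ≤ t}) :
    rS X (rN X t ω) ω ≤ t :=
  (le_rN_iff hX ht hbdd).1 le_rfl

lemma lt_rS_rN_add_one (hX : ∀ n, 0 ≤ X n ω) (ht : 0 ≤ t)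
    (hbdd : BddAbove {n | rS X n ω ≤ t}) : t < rS X (rN X t ω + 1) ω :=
  not_le.1 fun h => (rN X t ω).lt_add_one.not_ge ((le_rN_iff hX ht hbdd).2 h)

lemma setOf_rS_succ_le_subset {n : ℕ} (hX : ∀ ω, 0 ≤ X n ω) (t : ℝ) :
    {ω | rS X (n + 1) ω ≤ t} ⊆ {ω | rS X n ω ≤ t} := fun ω (h : rS X (n + 1) ω ≤ t) => by
  rw [rS_succ] at h
  exact le_trans (le_add_of_nonneg_right (hX ω)) h

lemma sdiff_setOf_rS_succ_le_subset (n : ℕ) (s t : ℝ) :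
    {ω | rS X n ω ≤ t} \ {ω | rS X (n + 1) ω ≤ t}
      ⊆ ({ω | rS X n ω ≤ s} ∩ {ω | t - s < X n ω}) ∪ ({ω | rS X n ω ≤ t} \ {ω | rS X n ω ≤ s}) := by
  rintro ω ⟨hn, hn1⟩
  simp only [Set.mem_ofPred_eq, rS_succ, not_le] at hn hn1
  by_cases hs : rS X n ω ≤ s
  · exact Or.inl ⟨hs, show t - s < X n ω by linarith⟩
  · exact Or.inr ⟨hn, hs⟩

lemma tsum_ite_eq_sum_range {p : ℕ → Prop} [DecidablePred p] {m : ℕ} (hp : ∀ n, p n ↔ n < m)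
    (f : ℕ → ℝ) : ∑' n, (if p n then f n else 0) = ∑ n ∈ range m, f n := by
  rw [tsum_eq_sum (s := range m) fun n hn => if_neg (by simpa [hp] using hn)]
  exact sum_congr rfl fun n hn => if_pos ((hp n).2 (mem_range.1 hn))

lemma tsum_indicator_rS_le (hX : ∀ n, 0 ≤ X n ω) (ht : 0 ≤ t)
    (hbdd : BddAbove {n | rS X n ω ≤ t}) (f : ℕ → Ω → ℝ) :
    ∑' n, {ω | rS X n ω ≤ t}.indicator (f n) ω = ∑ n ∈ range (rN X t ω + 1), f n ω := by
  simp only [Set.indicator_apply, Set.mem_ofPred_eq]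
  exact tsum_ite_eq_sum_range (fun n => by rw [← le_rN_iff hX ht hbdd, Nat.lt_succ_iff]) _

lemma tsum_indicator_rS_succ_le (hX : ∀ n, 0 ≤ X n ω) (ht : 0 ≤ t)
    (hbdd : BddAbove {n | rS X n ω ≤ t}) (f : ℕ → Ω → ℝ) :
    ∑' n, {ω | rS X (n + 1) ω ≤ t}.indicator (f n) ω = ∑ n ∈ range (rN X t ω), f n ω := by
  simp only [Set.indicator_apply, Set.mem_ofPred_eq]
  exact tsum_ite_eq_sum_range (fun n => by rw [← le_rN_iff hX ht hbdd, Nat.add_one_le_iff]) _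

end Epochs

lemma integral_pos_of_forall_pos {Ω : Type*} [MeasurableSpace Ω] {μ : Measure Ω} [NeZero μ]
    {f : Ω → ℝ} (hf : Integrable f μ) (hpos : ∀ ω, 0 < f ω) : 0 < ∫ ω, f ω ∂μ := by
  rw [integral_pos_iff_support_of_nonneg (fun ω => (hpos ω).le) hf,
    Function.support_eq_univ fun ω => (hpos ω).ne']
  exact Measure.measure_univ_pos.2 (NeZero.ne μ)

section RenewalFunction

variable {Ω : Type*} [MeasurableSpace Ω] {μ : Measure Ω} [IsProbabilityMeasure μ]
  {X : ℕ → Ω → ℝ} {t : ℝ}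

/-- `m(t) = E[N(t) + 1]`: the epoch `S_0 = 0` is counted. -/
noncomputable def renewalFunction (μ : Measure Ω) (X : ℕ → Ω → ℝ) (t : ℝ) : ℝ :=
  ∑' n, μ.real {ω | rS X n ω ≤ t}

lemma mgf_neg_one_lt_one {Y : Ω → ℝ} (hY : Measurable Y) (hpos : ∀ ω, 0 < Y ω) :
    mgf Y μ (-1) < 1 := by
  have hlt : ∀ ω, Real.exp (-1 * Y ω) < 1 := fun ω => Real.exp_lt_one_iff.2 (by linarith [hpos ω])
  have hint : Integrable (fun ω => Real.exp (-1 * Y ω)) μ :=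
    Integrable.of_bound (hY.const_mul _).exp.aestronglyMeasurable 1
      (ae_of_all _ fun ω => by simpa [abs_of_pos (Real.exp_pos _)] using (hlt ω).le)
  have hgap : 0 < ∫ ω, (1 - Real.exp (-1 * Y ω)) ∂μ :=
    integral_pos_of_forall_pos ((integrable_const 1).sub hint) fun ω => sub_pos.2 (hlt ω)
  rw [integral_sub (integrable_const 1) hint, integral_const, probReal_univ, one_smul] at hgap
  exact sub_pos.1 hgap

lemma IsIIDSeq.measureReal_rS_le_le (hX : IsIIDSeq μ X) (hX0 : ∀ n ω, 0 ≤ X n ω) (n : ℕ)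
    (t : ℝ) :
    μ.real {ω | rS X n ω ≤ t} ≤ Real.exp t * mgf (X 0) μ (-1) ^ n := by
  have hS : rS X n = ∑ i ∈ range n, X i := by ext ω; simp [rS]
  have hmgf : mgf (rS X n) μ (-1) = mgf (X 0) μ (-1) ^ n := by
    rw [hS, hX.indep.mgf_sum hX.measurable, prod_congr rfl fun i _ =>
      mgf_congr_of_identDistrib _ _ (hX.identDistrib i) _, prod_const, card_range]
  have hint : Integrable (fun ω => Real.exp (-1 * rS X n ω)) μ := by
    refine .of_bound ((measurable_rS hX.measurable n).const_mul _).exp.aestronglyMeasurable 1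
      (ae_of_all _ fun ω => ?_)
    have : 0 ≤ rS X n ω := sum_nonneg fun i _ => hX0 i ω
    simpa [abs_of_pos (Real.exp_pos _)] using this
  simpa [hmgf] using measure_le_le_exp_mul_mgf (X := rS X n) t (by norm_num : (-1 : ℝ) ≤ 0) hint

lemma IsIIDSeq.summable_measureReal_rS_le (hX : IsIIDSeq μ X) (hpos : ∀ n ω, 0 < X n ω)
    (t : ℝ) : Summable fun n => μ.real {ω | rS X n ω ≤ t} :=
  .of_nonneg_of_le (fun _ => measureReal_nonneg)
    (hX.measureReal_rS_le_le (fun n ω => (hpos n ω).le) · t)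
    ((summable_geometric_of_lt_one (mgf_nonneg) (mgf_neg_one_lt_one (hX.measurable 0)
      (hpos 0))).mul_left _)

lemma IsIIDSeq.ae_tendsto_rS_atTop (hX : IsIIDSeq μ X) (hpos : ∀ n ω, 0 < X n ω) :
    ∀ᵐ ω ∂μ, Tendsto (rS X · ω) atTop atTop := by
  have hk (k : ℕ) : ∀ᵐ ω ∂μ, ∀ᶠ n in atTop, ω ∉ {ω | rS X n ω ≤ k} := by
    refine ae_eventually_notMem ?_
    have hreal : (fun n => μ {ω | rS X n ω ≤ k})
        = fun n => ENNReal.ofReal (μ.real {ω | rS X n ω ≤ k}) :=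
      funext fun n => (ofReal_measureReal (measure_ne_top μ _)).symm
    rw [hreal, ← ENNReal.ofReal_tsum_of_nonneg (fun _ => measureReal_nonneg)
      (hX.summable_measureReal_rS_le hpos k)]
    exact ENNReal.ofReal_ne_top
  filter_upwards [ae_all_iff.2 hk] with ω hω
  refine tendsto_atTop.2 fun b => ?_
  obtain ⟨k, hk⟩ := exists_nat_ge b
  exact (hω k).mono fun n hn => hk.trans (not_le.1 hn).le

lemma IsIIDSeq.one_le_renewalFunction (hX : IsIIDSeq μ X) (hpos : ∀ n ω, 0 < X n ω)
    (ht : 0 ≤ t) : 1 ≤ renewalFunction μ X t := by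
  have h0 : μ.real {ω | rS X 0 ω ≤ t} = 1 := by simp [ht]
  exact h0 ▸ (hX.summable_measureReal_rS_le hpos t).le_tsum 0 fun _ _ => measureReal_nonneg

lemma IsIIDSeq.renewalFunction_le_of_le {Y : ℕ → Ω → ℝ} (hY : IsIIDSeq μ Y)
    (hYpos : ∀ n ω, 0 < Y n ω) (hYX : ∀ n ω, Y n ω ≤ X n ω) (t : ℝ) :
    renewalFunction μ X t ≤ renewalFunction μ Y t := by
  have hle (n : ℕ) : μ.real {ω | rS X n ω ≤ t} ≤ μ.real {ω | rS Y n ω ≤ t} :=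
    measureReal_mono fun ω (hω : rS X n ω ≤ t) =>
      (sum_le_sum fun i _ => hYX i ω).trans hω
  have hsum := hY.summable_measureReal_rS_le hYpos t
  exact (hsum.of_nonneg_of_le (fun _ => measureReal_nonneg) hle).tsum_le_tsum hle hsum

end RenewalFunction

section Wald

variable {Ω E : Type*} [MeasurableSpace Ω] [MeasurableSpace E] {μ : Measure Ω}
  {Z : ℕ → Ω → E} {X : ℕ → Ω → ℝ} {ψ : E → ℝ}

lemma IsIIDSeq.indepFun_rS (hZ : IsIIDSeq μ Z) (hψ : Measurable ψ) (hXZ : ∀ n, X n = ψ ∘ Z n)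
    (n : ℕ) : IndepFun (Z n) (rS X n) μ := by
  have h := hZ.indep.indepFun_finset {n} (range n) (by simp) hZ.measurable
  have hsum : Measurable fun z : range n → E => ∑ i, ψ (z i) :=
    Finset.measurable_sum _ fun i _ => hψ.comp (measurable_pi_apply i)
  convert h.comp (measurable_pi_apply ⟨n, mem_singleton_self n⟩) hsum using 1
  · rfl
  · ext ω
    simp only [rS, hXZ, Function.comp_apply]
    exact (Finset.sum_coe_sort (range n) fun i => ψ (Z i ω)).symm

lemma IsIIDSeq.setIntegral_rS_le (hZ : IsIIDSeq μ Z) (hψ : Measurable ψ)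
    (hXZ : ∀ n, X n = ψ ∘ Z n) {φ : E → ℝ} (hφ : Measurable φ) (n : ℕ) (t : ℝ) :
    ∫ ω in {ω | rS X n ω ≤ t}, φ (Z n ω) ∂μ
      = μ.real {ω | rS X n ω ≤ t} * ∫ ω, φ (Z 0 ω) ∂μ := by
  have hS : Measurable (rS X n) := measurable_rS (hXZ · ▸ hψ.comp (hZ.measurable _)) n
  have hmul : {ω | rS X n ω ≤ t}.indicator (fun ω => φ (Z n ω))
      = fun ω => φ (Z n ω) * (Set.Iic t).indicator 1 (rS X n ω) := by
    ext ω
    by_cases h : rS X n ω ≤ t <;> simp [h]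
  rw [← integral_indicator (measurableSet_le hS measurable_const), hmul,
    (hZ.indepFun_rS hψ hXZ n).integral_fun_comp_mul_comp (hZ.measurable n).aemeasurable
      hS.aemeasurable hφ.aestronglyMeasurable
      (measurable_one.indicator measurableSet_Iic).aestronglyMeasurable,
    mul_comm]
  exact congrArg₂ (· * ·) (integral_indicator_one (measurableSet_le hS measurable_const))
    ((hZ.identDistrib n).comp hφ).integral_eq

end Wald

lemma tendsto_integral_min_atTop {Ω : Type*} [MeasurableSpace Ω] {μ : Measure Ω} {f : Ω → ℝ}
    (hf : Integrable f μ) :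
    Tendsto (fun b : ℝ => ∫ ω, min (f ω) b ∂μ) atTop (𝓝 (∫ ω, f ω ∂μ)) := by
  refine tendsto_integral_filter_of_dominated_convergence (fun ω => |f ω|)
    (.of_forall fun b => hf.aestronglyMeasurable.inf aestronglyMeasurable_const)
    ((eventually_ge_atTop 0).mono fun b hb => ae_of_all _ fun ω => ?_) hf.abs
    (ae_of_all _ fun ω => tendsto_const_nhds.congr'
      ((eventually_ge_atTop (f ω)).mono fun b hb => (min_eq_left hb).symm))
  rcases le_total (f ω) b with h | h
  · rw [min_eq_left h, Real.norm_eq_abs]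
  · rw [min_eq_right h, Real.norm_of_nonneg hb]
    exact h.trans (le_abs_self _)

section ElementaryRenewal

variable {Ω : Type*} [MeasurableSpace Ω] {μ : Measure Ω} [IsProbabilityMeasure μ]
  {X : ℕ → Ω → ℝ} {t : ℝ}

lemma IsIIDSeq.integral_rS_rN_add_one (hX : IsIIDSeq μ X) (hpos : ∀ n ω, 0 < X n ω)
    (hint : Integrable (X 0) μ) (ht : 0 ≤ t) :
    ∫ ω, rS X (rN X t ω + 1) ω ∂μ = renewalFunction μ X t * μ[X 0] := by
  have hmeas (n : ℕ) : MeasurableSet {ω | rS X n ω ≤ t} :=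
    measurableSet_le (measurable_rS hX.measurable n) measurable_const
  have hterm (n : ℕ) : ∫ ω, {ω | rS X n ω ≤ t}.indicator (X n) ω ∂μ
      = μ.real {ω | rS X n ω ≤ t} * μ[X 0] := by
    rw [integral_indicator (hmeas n)]
    exact hX.setIntegral_rS_le measurable_id (fun _ => rfl) measurable_id n t
  have hnorm (n : ℕ) : ∫ ω, ‖{ω | rS X n ω ≤ t}.indicator (X n) ω‖ ∂μ
      = μ.real {ω | rS X n ω ≤ t} * μ[X 0] := by
    rw [← hterm]
    exact integral_congr_ae (ae_of_all _ fun ω =>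
      Real.norm_of_nonneg (Set.indicator_nonneg (fun ω _ => (hpos n ω).le) ω))
  have hae : (fun ω => rS X (rN X t ω + 1) ω)
      =ᵐ[μ] fun ω => ∑' n, {ω | rS X n ω ≤ t}.indicator (X n) ω := by
    filter_upwards [hX.ae_tendsto_rS_atTop hpos] with ω hω
    exact (tsum_indicator_rS_le (fun n => (hpos n ω).le) ht (bddAbove_setOf_rS_le hω t) X).symm
  rw [integral_congr_ae hae, ← integral_tsum_of_summable_integral_norm
    (fun n => (((hX.identDistrib n).integrable_iff).2 hint).indicator (hmeas n))
    (by simpa only [hnorm] using (hX.summable_measureReal_rS_le hpos t).mul_right _)]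
  simp only [hterm, tsum_mul_right, renewalFunction]

lemma IsIIDSeq.integrable_rS_rN_add_one (hX : IsIIDSeq μ X) (hpos : ∀ n ω, 0 < X n ω)
    (hint : Integrable (X 0) μ) (ht : 0 ≤ t) :
    Integrable (fun ω => rS X (rN X t ω + 1) ω) μ := by
  refine Integrable.of_integral_ne_zero ?_
  rw [hX.integral_rS_rN_add_one hpos hint ht]
  exact (mul_pos (one_pos.trans_le (hX.one_le_renewalFunction hpos ht))
    (integral_pos_of_forall_pos hint (hpos 0))).ne'

lemma IsIIDSeq.le_renewalFunction_mul (hX : IsIIDSeq μ X) (hpos : ∀ n ω, 0 < X n ω)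
    (hint : Integrable (X 0) μ) (ht : 0 ≤ t) : t ≤ renewalFunction μ X t * μ[X 0] := by
  rw [← hX.integral_rS_rN_add_one hpos hint ht]
  refine le_of_eq_of_le (by simp) (integral_mono_ae (integrable_const t)
    (hX.integrable_rS_rN_add_one hpos hint ht) ?_)
  filter_upwards [hX.ae_tendsto_rS_atTop hpos] with ω hω
  exact (lt_rS_rN_add_one (fun n => (hpos n ω).le) ht (bddAbove_setOf_rS_le hω t)).le

lemma IsIIDSeq.renewalFunction_mul_le (hX : IsIIDSeq μ X) (hpos : ∀ n ω, 0 < X n ω) {b : ℝ}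
    (hb : ∀ n ω, X n ω ≤ b) (ht : 0 ≤ t) : renewalFunction μ X t * μ[X 0] ≤ t + b := by
  have hint : Integrable (X 0) μ := .of_bound (hX.measurable 0).aestronglyMeasurable b
    (ae_of_all _ fun ω => (Real.norm_of_nonneg (hpos 0 ω).le).trans_le (hb 0 ω))
  rw [← hX.integral_rS_rN_add_one hpos hint ht]
  refine le_of_le_of_eq (integral_mono_ae (hX.integrable_rS_rN_add_one hpos hint ht)
    (integrable_const (t + b)) ?_) (by simp)
  filter_upwards [hX.ae_tendsto_rS_atTop hpos] with ω hω
  rw [rS_succ]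
  exact add_le_add (rS_rN_le (fun n => (hpos n ω).le) ht (bddAbove_setOf_rS_le hω t)) (hb _ ω)

theorem IsIIDSeq.tendsto_renewalFunction_div (hX : IsIIDSeq μ X) (hpos : ∀ n ω, 0 < X n ω)
    (hint : Integrable (X 0) μ) :
    Tendsto (fun t => renewalFunction μ X t / t) atTop (𝓝 (μ[X 0])⁻¹) := by
  have hτ : 0 < μ[X 0] := integral_pos_of_forall_pos hint (hpos 0)
  refine tendsto_order.2 ⟨fun a ha => ?_, fun a ha => ?_⟩
  · filter_upwards [eventually_gt_atTop 0] with t ht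
    refine ha.trans_le ?_
    rw [le_div_iff₀ ht, inv_mul_le_iff₀ hτ, mul_comm]
    exact hX.le_renewalFunction_mul hpos hint ht.le
  obtain ⟨b, hba, hb⟩ : ∃ b, (∫ ω, min (X 0 ω) b ∂μ)⁻¹ < a ∧ 0 < b :=
    (((tendsto_integral_min_atTop hint).inv₀ hτ.ne').eventually (gt_mem_nhds ha)).and
      (eventually_gt_atTop 0) |>.exists
  have hY : IsIIDSeq μ fun n ω => min (X n ω) b := hX.comp (measurable_id.min measurable_const)
  have hYpos (n : ℕ) (ω : Ω) : 0 < min (X n ω) b := lt_min (hpos n ω) hb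
  have hτb : 0 < ∫ ω, min (X 0 ω) b ∂μ := integral_pos_of_forall_pos
    (hint.mono' (hY.measurable 0).aestronglyMeasurable (ae_of_all _ fun ω => by
      rw [Real.norm_of_nonneg (hYpos 0 ω).le]; exact min_le_left _ _)) (hYpos 0)
  have hlim : Tendsto (fun t => (1 + b / t) * (∫ ω, min (X 0 ω) b ∂μ)⁻¹) atTop
      (𝓝 (∫ ω, min (X 0 ω) b ∂μ)⁻¹) := by
    simpa using ((tendsto_const_nhds.div_atTop tendsto_id).const_add 1).mul_const
      (∫ ω, min (X 0 ω) b ∂μ)⁻¹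
  filter_upwards [hlim.eventually (gt_mem_nhds hba), eventually_gt_atTop 0] with t hta ht
  refine lt_of_le_of_lt ?_ hta
  calc renewalFunction μ X t / t
      ≤ renewalFunction μ (fun n ω => min (X n ω) b) t / t :=
        div_le_div_of_nonneg_right
          (hY.renewalFunction_le_of_le hYpos (fun n ω => min_le_left _ _) t) ht.le
    _ ≤ (1 + b / t) * (∫ ω, min (X 0 ω) b ∂μ)⁻¹ := by
        rw [div_le_iff₀ ht, mul_right_comm, le_mul_inv_iff₀ hτb, one_add_div ht.ne',
          div_mul_cancel₀ _ ht.ne']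
        exact hY.renewalFunction_mul_le hYpos (fun n ω => min_le_right _ _) ht.le

lemma IsIIDSeq.tendsto_renewalFunction_mul_div (hX : IsIIDSeq μ X) (hpos : ∀ n ω, 0 < X n ω)
    (hint : Integrable (X 0) μ) {a : ℝ} (ha : 0 < a) :
    Tendsto (fun t => renewalFunction μ X (a * t) / t) atTop (𝓝 (a * (μ[X 0])⁻¹)) := by
  refine (((hX.tendsto_renewalFunction_div hpos hint).comp
    (tendsto_id.const_mul_atTop ha)).const_mul a).congr' ?_
  filter_upwards [eventually_gt_atTop 0] with t ht
  simp only [Function.comp_apply, id]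
  field_simp

end ElementaryRenewal

lemma tendsto_setIntegral_setOf_lt_atTop {Ω : Type*} [MeasurableSpace Ω] {μ : Measure Ω}
    {f Y : Ω → ℝ} (hf : Integrable f μ) (hY : Measurable Y) :
    Tendsto (fun u : ℝ => ∫ ω in {ω | u < Y ω}, f ω ∂μ) atTop (𝓝 0) := by
  have hempty : ⋂ u : ℝ, {ω | u < Y ω} = ∅ :=
    Set.eq_empty_of_forall_notMem fun ω hω => lt_irrefl (Y ω) (Set.mem_iInter.1 hω (Y ω))
  simpa [hempty] using tendsto_setIntegral_of_antitone (μ := μ) (f := f)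
    (fun u => measurableSet_lt measurable_const hY)
    (fun u v huv ω (hω : v < Y ω) => huv.trans_lt hω) ⟨0, hf.integrableOn⟩

section Reward

variable {Ω : Type*} [MeasurableSpace Ω] {μ : Measure Ω} {X R : ℕ → Ω → ℝ} {s t : ℝ}

lemma IsIIDSeq.fst (hXR : IsIIDSeq μ fun n ω => (X n ω, R n ω)) : IsIIDSeq μ X :=
  hXR.comp measurable_fst

lemma IsIIDSeq.integrable_snd (hXR : IsIIDSeq μ fun n ω => (X n ω, R n ω))
    (hR : Integrable (R 0) μ) (n : ℕ) : Integrable (R n) μ :=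
  ((hXR.identDistrib n).comp measurable_snd).integrable_iff.2 hR

lemma IsIIDSeq.setIntegral_rS_le_prod (hXR : IsIIDSeq μ fun n ω => (X n ω, R n ω))
    {φ : ℝ × ℝ → ℝ} (hφ : Measurable φ) (n : ℕ) (t : ℝ) :
    ∫ ω in {ω | rS X n ω ≤ t}, φ (X n ω, R n ω) ∂μ
      = μ.real {ω | rS X n ω ≤ t} * ∫ ω, φ (X 0 ω, R 0 ω) ∂μ :=
  hXR.setIntegral_rS_le measurable_fst (fun _ => rfl) hφ n t

lemma IsIIDSeq.abs_setIntegral_rS_succ_le_sub_le (hXR : IsIIDSeq μ fun n ω => (X n ω, R n ω))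
    (hpos : ∀ n ω, 0 < X n ω) (hR : Integrable (R 0) μ) (hst : s ≤ t) (n : ℕ) :
    |∫ ω in {ω | rS X (n + 1) ω ≤ t}, R n ω ∂μ - μ.real {ω | rS X n ω ≤ t} * μ[R 0]|
      ≤ μ.real {ω | rS X n ω ≤ s} * ∫ ω in {ω | t - s < X 0 ω}, |R 0 ω| ∂μ
        + (μ.real {ω | rS X n ω ≤ t} - μ.real {ω | rS X n ω ≤ s}) * ∫ ω, |R 0 ω| ∂μ := by
  have hX := hXR.fst
  have hmeas (u : ℝ) : MeasurableSet {ω | rS X n ω ≤ u} :=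
    measurableSet_le (measurable_rS hX.measurable n) measurable_const
  have htail (m : ℕ) : MeasurableSet {ω | t - s < X m ω} :=
    measurableSet_lt measurable_const (hX.measurable m)
  have hRn := hXR.integrable_snd hR n
  have hlong : ∫ ω in {ω | rS X n ω ≤ s} ∩ {ω | t - s < X n ω}, |R n ω| ∂μ
      = μ.real {ω | rS X n ω ≤ s} * ∫ ω in {ω | t - s < X 0 ω}, |R 0 ω| ∂μ := by
    rw [← setIntegral_indicator (htail n), ← integral_indicator (htail 0)]
    exact hXR.setIntegral_rS_le_prod
      (φ := fun p => {p : ℝ × ℝ | t - s < p.1}.indicator (fun p => |p.2|) p)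
      (measurable_snd.abs.indicator (measurableSet_lt measurable_const measurable_fst)) n s
  calc |∫ ω in {ω | rS X (n + 1) ω ≤ t}, R n ω ∂μ - μ.real {ω | rS X n ω ≤ t} * μ[R 0]|
      = |∫ ω in {ω | rS X n ω ≤ t} \ {ω | rS X (n + 1) ω ≤ t}, R n ω ∂μ| := by
        rw [← hXR.setIntegral_rS_le_prod measurable_snd, setIntegral_sdiff
          (measurableSet_le (measurable_rS hX.measurable _) measurable_const) hRn.integrableOn
          (setOf_rS_succ_le_subset (fun ω => (hpos n ω).le) t), abs_sub_comm]
    _ ≤ ∫ ω in {ω | rS X n ω ≤ t} \ {ω | rS X (n + 1) ω ≤ t}, |R n ω| ∂μ :=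
        abs_integral_le_integral_abs
    _ ≤ ∫ ω in ({ω | rS X n ω ≤ s} ∩ {ω | t - s < X n ω})
          ∪ ({ω | rS X n ω ≤ t} \ {ω | rS X n ω ≤ s}), |R n ω| ∂μ :=
        setIntegral_mono_set hRn.abs.integrableOn (ae_of_all _ fun _ => abs_nonneg _)
          (sdiff_setOf_rS_succ_le_subset n s t).eventuallyLE
    _ = _ := by
        rw [setIntegral_union (Set.disjoint_left.2 fun ω h1 h2 => h2.2 h1.1)
          ((hmeas t).diff (hmeas s)) hRn.abs.integrableOn hRn.abs.integrableOn, hlong,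
          setIntegral_sdiff (hmeas s) hRn.abs.integrableOn
            (Set.ofPred_subset_ofPred.2 fun _ h => h.trans hst),
          hXR.setIntegral_rS_le_prod measurable_snd.abs,
          hXR.setIntegral_rS_le_prod measurable_snd.abs, sub_mul]

lemma IsIIDSeq.integral_sum_range_rN [IsProbabilityMeasure μ]
    (hXR : IsIIDSeq μ fun n ω => (X n ω, R n ω)) (hpos : ∀ n ω, 0 < X n ω)
    (hR : Integrable (R 0) μ) (ht : 0 ≤ t) :
    ∫ ω, ∑ n ∈ range (rN X t ω), R n ω ∂μ
      = ∑' n, ∫ ω in {ω | rS X (n + 1) ω ≤ t}, R n ω ∂μ := by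
  have hX := hXR.fst
  have hmeas (m : ℕ) : MeasurableSet {ω | rS X m ω ≤ t} :=
    measurableSet_le (measurable_rS hX.measurable m) measurable_const
  have hnorm (n : ℕ) : ∫ ω, ‖{ω | rS X (n + 1) ω ≤ t}.indicator (R n) ω‖ ∂μ
      ≤ μ.real {ω | rS X n ω ≤ t} * ∫ ω, |R 0 ω| ∂μ := by
    simp_rw [norm_indicator_eq_indicator_norm, Real.norm_eq_abs]
    rw [integral_indicator (hmeas _)]
    refine le_of_le_of_eq ?_ (hXR.setIntegral_rS_le_prod measurable_snd.abs n t)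
    exact setIntegral_mono_set (hXR.integrable_snd hR n).abs.integrableOn
      (ae_of_all _ fun _ => abs_nonneg _)
      (setOf_rS_succ_le_subset (fun ω => (hpos n ω).le) t).eventuallyLE
  have hae : (fun ω => ∑ n ∈ range (rN X t ω), R n ω)
      =ᵐ[μ] fun ω => ∑' n, {ω | rS X (n + 1) ω ≤ t}.indicator (R n) ω := by
    filter_upwards [hX.ae_tendsto_rS_atTop hpos] with ω hω
    exact (tsum_indicator_rS_succ_le (fun n => (hpos n ω).le) ht
      (bddAbove_setOf_rS_le hω t) R).symm
  rw [integral_congr_ae hae, ← integral_tsum_of_summable_integral_norm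
    (fun n => (hXR.integrable_snd hR n).indicator (hmeas _))
    (.of_nonneg_of_le (fun _ => integral_nonneg fun _ => norm_nonneg _) hnorm
      ((hX.summable_measureReal_rS_le hpos t).mul_right _))]
  exact tsum_congr fun n => integral_indicator (hmeas _)

lemma IsIIDSeq.abs_integral_sum_range_rN_sub_le [IsProbabilityMeasure μ]
    (hXR : IsIIDSeq μ fun n ω => (X n ω, R n ω)) (hpos : ∀ n ω, 0 < X n ω)
    (hR : Integrable (R 0) μ) (hst : s ≤ t) (ht : 0 ≤ t) :
    |∫ ω, ∑ n ∈ range (rN X t ω), R n ω ∂μ - renewalFunction μ X t * μ[R 0]|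
      ≤ renewalFunction μ X s * ∫ ω in {ω | t - s < X 0 ω}, |R 0 ω| ∂μ
        + (renewalFunction μ X t - renewalFunction μ X s) * ∫ ω, |R 0 ω| ∂μ := by
  set a : ℕ → ℝ := fun n => ∫ ω in {ω | rS X (n + 1) ω ≤ t}, R n ω ∂μ
  set b : ℕ → ℝ := fun n => μ.real {ω | rS X n ω ≤ t} * μ[R 0]
  set D : ℕ → ℝ := fun n =>
    μ.real {ω | rS X n ω ≤ s} * ∫ ω in {ω | t - s < X 0 ω}, |R 0 ω| ∂μ
      + (μ.real {ω | rS X n ω ≤ t} - μ.real {ω | rS X n ω ≤ s}) * ∫ ω, |R 0 ω| ∂μ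
  have hSt := hXR.fst.summable_measureReal_rS_le hpos t
  have hSs := hXR.fst.summable_measureReal_rS_le hpos s
  have hD : Summable D := (hSs.mul_right _).add ((hSt.sub hSs).mul_right _)
  have hb : Summable b := hSt.mul_right _
  have hab : Summable (a - b) := .of_norm_bounded hD
    (hXR.abs_setIntegral_rS_succ_le_sub_le hpos hR hst)
  have hsplit : ∫ ω, ∑ n ∈ range (rN X t ω), R n ω ∂μ - renewalFunction μ X t * μ[R 0]
      = ∑' n, (a - b) n := by
    rw [hXR.integral_sum_range_rN hpos hR ht, renewalFunction, ← tsum_mul_right,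
      ← Summable.tsum_sub (by simpa using hab.add hb) hb]
    rfl
  calc |∫ ω, ∑ n ∈ range (rN X t ω), R n ω ∂μ - renewalFunction μ X t * μ[R 0]|
      ≤ ∑' n, ‖(a - b) n‖ := hsplit ▸ norm_tsum_le_tsum_norm hab.norm
    _ ≤ ∑' n, D n :=
        hab.norm.tsum_le_tsum (hXR.abs_setIntegral_rS_succ_le_sub_le hpos hR hst) hD
    _ = _ := by
        rw [(hSs.mul_right _).tsum_add ((hSt.sub hSs).mul_right _), tsum_mul_right,
          tsum_mul_right, hSt.tsum_sub hSs]
        rfl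

lemma IsIIDSeq.tendsto_cycle_reward_bound_div [IsProbabilityMeasure μ]
    (hXR : IsIIDSeq μ fun n ω => (X n ω, R n ω))
    (hpos : ∀ n ω, 0 < X n ω) (hX : Integrable (X 0) μ) (hR : Integrable (R 0) μ) {ε : ℝ}
    (hε0 : 0 < ε) (hε1 : ε < 1) :
    Tendsto (fun t =>
        (renewalFunction μ X ((1 - ε) * t) * ∫ ω in {ω | ε * t < X 0 ω}, |R 0 ω| ∂μ
          + (renewalFunction μ X t - renewalFunction μ X ((1 - ε) * t)) * ∫ ω, |R 0 ω| ∂μ) / t)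
      atTop (𝓝 (ε * (∫ ω, |R 0 ω| ∂μ) / μ[X 0])) := by
  have hm := hXR.fst.tendsto_renewalFunction_div hpos hX
  have hm' := hXR.fst.tendsto_renewalFunction_mul_div hpos hX (sub_pos.2 hε1)
  have htail : Tendsto (fun t => ∫ ω in {ω | ε * t < X 0 ω}, |R 0 ω| ∂μ) atTop (𝓝 0) :=
    (tendsto_setIntegral_setOf_lt_atTop hR.abs (hXR.fst.measurable 0)).comp
      (tendsto_id.const_mul_atTop hε0)
  convert (hm'.mul htail).add ((hm.sub hm').mul_const (∫ ω, |R 0 ω| ∂μ)) using 2 <;> ring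

lemma IsIIDSeq.tendsto_integral_sum_range_rN_sub_div [IsProbabilityMeasure μ]
    (hXR : IsIIDSeq μ fun n ω => (X n ω, R n ω)) (hpos : ∀ n ω, 0 < X n ω)
    (hX : Integrable (X 0) μ) (hR : Integrable (R 0) μ) :
    Tendsto (fun t =>
      (∫ ω, ∑ n ∈ range (rN X t ω), R n ω ∂μ - renewalFunction μ X t * μ[R 0]) / t)
      atTop (𝓝 0) := by
  rw [NormedAddGroup.tendsto_nhds_zero]
  intro δ hδ
  have hsmall : ∀ᶠ ε in 𝓝 (0 : ℝ), ε * (∫ ω, |R 0 ω| ∂μ) / μ[X 0] < δ ∧ ε < 1 :=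
    ((((continuous_id.mul continuous_const).div_const _).tendsto' 0 0 (by simp)).eventually
      (gt_mem_nhds hδ)).and (gt_mem_nhds one_pos)
  obtain ⟨ε, ⟨hεδ, hε1⟩, hε0⟩ :=
    ((hsmall.filter_mono nhdsWithin_le_nhds).and (self_mem_nhdsWithin (s := Set.Ioi 0))).exists
  filter_upwards [(hXR.tendsto_cycle_reward_bound_div hpos hX hR hε0 hε1).eventually
    (gt_mem_nhds hεδ), eventually_gt_atTop 0] with t hδt ht
  rw [Real.norm_eq_abs, abs_div, abs_of_pos ht]
  refine lt_of_le_of_lt (div_le_div_of_nonneg_right ?_ ht.le) hδt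
  have hbound := hXR.abs_integral_sum_range_rN_sub_le hpos hR (s := (1 - ε) * t)
    (by nlinarith) ht.le
  rwa [show t - (1 - ε) * t = ε * t by ring] at hbound

end Reward

/-- Renewal reward theorem, expectation version: `E[R(t)]/t → r/τ`. -/
theorem renewal_reward_mean
    {Ω : Type*} [MeasurableSpace Ω] (μ : Measure Ω) [IsProbabilityMeasure μ]
    (X R : ℕ → Ω → ℝ)
    (hmeas : ∀ n, Measurable fun ω => (X n ω, R n ω))
    (hindep : iIndepFun (fun n ω => (X n ω, R n ω)) μ)
    (hident : ∀ n, IdentDistrib (fun ω => (X n ω, R n ω)) (fun ω => (X 0 ω, R 0 ω)) μ μ)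
    (hpos : ∀ n ω, 0 < X n ω)
    (hXint : Integrable (X 0) μ) (hRint : Integrable (R 0) μ)
    (τ r : ℝ) (hτ : μ[X 0] = τ) (hr : μ[R 0] = r) :
    Tendsto (fun t : ℝ =>
      (∫ ω, (∑ n ∈ Finset.range (rN X t ω), R n ω) ∂μ) / t) atTop (nhds (r / τ)) := by
  subst hτ hr
  have hXR : IsIIDSeq μ fun n ω => (X n ω, R n ω) := ⟨hmeas, hindep, hident⟩
  have hmain := ((hXR.fst.tendsto_renewalFunction_div hpos hXint).const_mul μ[R 0]).add
    (hXR.tendsto_integral_sum_range_rN_sub_div hpos hXint hRint)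
  rw [add_zero, ← div_eq_mul_inv] at hmain
  refine hmain.congr fun t => ?_
  ring
end

section
/- Consider the deterministic renewal process with X_i = 1 for all i and end-of-cycle rewards R_i = 0. Within cycle j, partial rewards accrue as C(t) = C_j · f(t − ⌊t⌋), where f(x) = x on [0, 1/2], f(x) = 1 − x on [1/2, 1], and (C_j) are i.i.d. standard Cauchy random variables. Then for every non-integer t > 0, the cumulative reward R(t) = C(t) = C_{⌊t⌋+1} · f(t − ⌊t⌋) is not integrable, i.e., E[|R(t)|] = ∞, even though E[|R_i|] = 0 < ∞ for the end-of-cycle rewards. -/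
/-!
At a non-integer time `t` the tent factor `min (fract t) (1 - fract t)` is a nonzero constant, so
the reward at time `t` is integrable iff the Cauchy variable `C ⌊t⌋₊` is. A Cauchy distribution has
no first absolute moment: `x` times its density is of order `1 / x` at infinity.
-/

open MeasureTheory ProbabilityTheory Set
open scoped Real NNReal

namespace ProbabilityTheory

lemma le_mul_cauchyPDFReal {x₀ : ℝ} {γ : ℝ≥0} {x : ℝ} (hx : |x₀| + γ < x) :
    γ / (5 * π) * x⁻¹ ≤ x * cauchyPDFReal x₀ γ x := by
  have hx0 : 0 < x := lt_of_le_of_lt (by positivity) hx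
  have hD : (x - x₀) ^ 2 + (γ : ℝ) ^ 2 ≤ 5 * x ^ 2 := by
    have h₁ : |x - x₀| ≤ 2 * x := by
      rw [abs_le]; constructor <;> linarith [neg_abs_le x₀, le_abs_self x₀, γ.2]
    have h₂ : (γ : ℝ) ≤ x := by linarith [abs_nonneg x₀]
    nlinarith [sq_abs (x - x₀), abs_nonneg (x - x₀), γ.2]
  have hD0 : 0 < (x - x₀) ^ 2 + (γ : ℝ) ^ 2 := by
    have : x₀ < x := by linarith [le_abs_self x₀, γ.2]
    positivity
  rw [cauchyPDFReal_def]
  calc γ / (5 * π) * x⁻¹ = π⁻¹ * γ * (x / (5 * x ^ 2)) := by field_simp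
    _ ≤ π⁻¹ * γ * (x / ((x - x₀) ^ 2 + (γ : ℝ) ^ 2)) := by gcongr
    _ = x * (π⁻¹ * γ * ((x - x₀) ^ 2 + (γ : ℝ) ^ 2)⁻¹) := by ring

theorem not_integrable_id_cauchyMeasure (x₀ : ℝ) {γ : ℝ≥0} (hγ : γ ≠ 0) :
    ¬ Integrable id (cauchyMeasure x₀ γ) := by
  rw [cauchyMeasure_of_scale_ne_zero x₀ hγ, integrable_withDensity_iff (measurable_cauchyPDF x₀ γ)
    (ae_of_all _ fun _ => ENNReal.ofReal_lt_top)]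
  intro h
  have hinv : IntegrableOn (fun x : ℝ => γ / (5 * π) * x⁻¹) (Ioi (|x₀| + γ)) := by
    refine h.integrableOn.mono' (by fun_prop) ?_
    filter_upwards [ae_restrict_mem measurableSet_Ioi] with x hx
    have hx0 : 0 < x := lt_of_le_of_lt (by positivity) hx
    rw [Real.norm_of_nonneg (by positivity), cauchyPDF_def,
      ENNReal.toReal_ofReal (cauchyPDF_pos x₀ hγ x).le]
    exact le_mul_cauchyPDFReal hx
  have hc : (γ : ℝ) / (5 * π) ≠ 0 := by positivity
  exact not_integrableOn_Ioi_inv ((integrable_const_mul_iff hc.isUnit _).1 hinv)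

theorem not_integrable_of_map_eq_cauchyMeasure {Ω : Type*} [MeasurableSpace Ω]
    {μ : Measure Ω} {X : Ω → ℝ} (hX : AEMeasurable X μ) {x₀ : ℝ} {γ : ℝ≥0} (hγ : γ ≠ 0)
    (hmap : μ.map X = cauchyMeasure x₀ γ) : ¬ Integrable X μ := fun h =>
  not_integrable_id_cauchyMeasure x₀ hγ <|
    hmap ▸ (integrable_map_measure aestronglyMeasurable_id hX).2 h

lemma cauchyMeasure_zero_one :
    cauchyMeasure 0 1 = volume.withDensity fun x => ENNReal.ofReal (1 / (π * (1 + x ^ 2))) := by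
  rw [cauchyMeasure_of_scale_ne_zero 0 one_ne_zero]
  congr 1
  funext x
  rw [cauchyPDF_def, cauchyPDFReal_def]
  congr 1
  simp only [one_div, mul_inv_rev, NNReal.coe_one, mul_one, sub_zero, one_pow]
  ring

end ProbabilityTheory

lemma Int.fract_ne_zero_of_forall_ne_natCast {t : ℝ} (ht0 : 0 ≤ t) (ht : ∀ n : ℕ, t ≠ n) :
    Int.fract t ≠ 0 := by
  rw [Ne, ← Int.self_sub_floor, sub_eq_zero, ← natCast_floor_eq_intCast_floor ht0]
  exact ht _

lemma min_fract_one_sub_fract_pos {t : ℝ} (ht : Int.fract t ≠ 0) :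
    0 < min (Int.fract t) (1 - Int.fract t) :=
  lt_min ((Int.fract_nonneg t).lt_of_ne' ht) (sub_pos.2 (Int.fract_lt_one t))

theorem partial_reward_counterexample_general
    {Ω : Type*} [MeasurableSpace Ω] (μ : Measure Ω)
    (C : ℕ → Ω → ℝ)
    (hmeas : ∀ j, Measurable (C j))
    (hcauchy : ∀ j, μ.map (C j) =
      (volume : Measure ℝ).withDensity
        (fun x => ENNReal.ofReal (1 / (Real.pi * (1 + x ^ 2)))))
    (t : ℝ) (ht0 : 0 < t) (ht : ∀ n : ℕ, t ≠ (n : ℝ)) :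
    ¬ Integrable
        (fun ω => C ⌊t⌋₊ ω * min (Int.fract t) (1 - Int.fract t)) μ ∧
    (∫ ω, |(0 : ℝ)| ∂μ) = 0 := by
  refine ⟨?_, by simp⟩
  have hc := min_fract_one_sub_fract_pos (Int.fract_ne_zero_of_forall_ne_natCast ht0.le ht)
  rw [integrable_mul_const_iff hc.ne'.isUnit]
  exact not_integrable_of_map_eq_cauchyMeasure (hmeas _).aemeasurable one_ne_zero
    ((hcauchy _).trans cauchyMeasure_zero_one.symm)

/-- Counterexample with partial rewards: cycles of length 1 with zero end-of-cycle rewards,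
within-cycle reward `C_j · f(t - ⌊t⌋)` with `f` the tent function and `C_j` i.i.d. standard
Cauchy.  For every non-integer `t > 0` the cumulative reward at time `t` is not integrable,
even though the end-of-cycle rewards `R_i = 0` satisfy `E[|R_i|] = 0 < ∞`. -/
theorem partial_reward_counterexample
    {Ω : Type*} [MeasurableSpace Ω] (μ : Measure Ω) [IsProbabilityMeasure μ]
    (C : ℕ → Ω → ℝ)
    (hmeas : ∀ j, Measurable (C j))
    (hindep : iIndepFun C μ)
    (hcauchy : ∀ j, μ.map (C j) =
      (volume : Measure ℝ).withDensity
        (fun x => ENNReal.ofReal (1 / (Real.pi * (1 + x ^ 2)))))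
    (t : ℝ) (ht0 : 0 < t) (ht : ∀ n : ℕ, t ≠ (n : ℝ)) :
    ¬ Integrable
        (fun ω => C ⌊t⌋₊ ω * min (Int.fract t) (1 - Int.fract t)) μ ∧
    (∫ ω, |(0 : ℝ)| ∂μ) = 0 :=
  partial_reward_counterexample_general μ C hmeas hcauchy t ht0 ht
end
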